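/- Let A be a commutative ring and B an A-algebra that is flat as an A-module, and let M be a B-module that is flat as an A-module. Write A_red = A/Nil(A), B_red = B ⊗_A A_red, and M_red = M ⊗_A A_red. If the homological (projective) dimension of M as a B-module is at most n, then the homological (projective) dimension of M_red as a B_red-module is at most n. -/

import Mathlib

open TensorProduct

universe u

/-- `HomologicalDimLE R n M` : the module `M` has homological (projective) dimension
at most `n` over the ring `R`, i.e. `M` admits a projective resolution of length `n`.
For `n = 0` this means `M` is projective; for `n + 1` it means there is a surjection
from a projective module whose kernel has homological dimension at most `n`. -/
def HomologicalDimLE (R : Type u) [Ring R] : ℕ → (M : Type u) → [AddCommGroup M] →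
    [Module R M] → Prop
  | 0, M, _, _ => Module.Projective R M
  | n + 1, M, _, _ =>
      ∃ (E : Type u) (_ : AddCommGroup E) (_ : Module R E) (f : E →ₗ[R] M),
        Module.Projective R E ∧ Function.Surjective f ∧
          HomologicalDimLE R n (LinearMap.ker f)

open LinearMap

/-- If `0 → K → E → M → 0` is exact and `M` is flat, then `K ⊗ N → E ⊗ N` is injective
for every module `N`. -/
theorem rTensor_inj_of_flat_quot {R : Type*} [CommRing R]
    {K E M N : Type*} [AddCommGroup K] [AddCommGroup E] [AddCommGroup M] [AddCommGroup N]
    [Module R K] [Module R E] [Module R M] [Module R N] [Module.Flat R M]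
    (i : K →ₗ[R] E) (p : E →ₗ[R] M) (hi : Function.Injective i)
    (hexact : Function.Exact i p) (hp : Function.Surjective p) :
    Function.Injective (i.rTensor N) := by
  rw [injective_iff_map_eq_zero]
  intro x hx
  obtain ⟨q, hq⟩ : ∃ q : (N →₀ R) →ₗ[R] N, Function.Surjective q :=
    ⟨Finsupp.linearCombination R id, fun n => ⟨Finsupp.single n 1, by simp⟩⟩
  obtain ⟨y, hy⟩ := LinearMap.lTensor_surjective K hq x
  have h1 : (q.lTensor E) (i.rTensor (N →₀ R) y) = 0 := by
    have : (q.lTensor E) ((i.rTensor (N →₀ R)) y) = (i.rTensor N) ((q.lTensor K) y) := by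
      rw [← LinearMap.comp_apply, ← LinearMap.comp_apply,
        LinearMap.lTensor_comp_rTensor, LinearMap.rTensor_comp_lTensor]
    rw [this, hy, hx]
  have hEx1 := @lTensor_exact R ↥(ker q) (N →₀ R) N _ _ _ _ _ _ _ (ker q).subtype q E _ _
    q.exact_subtype_ker_map hq
  obtain ⟨z, hz⟩ := (hEx1 _).mp h1
  have h2 : ((ker q).subtype.lTensor M) (p.rTensor _ z) = 0 := by
    have e1 : ((ker q).subtype.lTensor M) ((p.rTensor _) z)
        = (p.rTensor (N →₀ R)) (((ker q).subtype.lTensor E) z) := by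
      rw [← LinearMap.comp_apply, ← LinearMap.comp_apply,
        LinearMap.lTensor_comp_rTensor, LinearMap.rTensor_comp_lTensor]
    have e2 : (p.rTensor (N →₀ R)) ((i.rTensor (N →₀ R)) y) = 0 := by
      rw [← LinearMap.comp_apply, ← LinearMap.rTensor_comp]
      have : p ∘ₗ i = 0 := by ext k; exact hexact.apply_apply_eq_zero k
      rw [this, LinearMap.rTensor_zero, LinearMap.zero_apply]
    rw [e1, hz, e2]
  have hjM : Function.Injective ((ker q).subtype.lTensor M) :=
    Module.Flat.lTensor_preserves_injective_linearMap _ (Submodule.injective_subtype _)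
  have h3 : (p.rTensor (ker q)) z = 0 := hjM (by simpa using h2)
  have hEx2 := @rTensor_exact R K E M _ _ _ _ _ _ _ i p ↥(ker q) _ _ hexact hp
  obtain ⟨w, hw⟩ := (hEx2 _).mp h3
  have h4 : (i.rTensor (N →₀ R)) (y - (ker q).subtype.lTensor K w) = 0 := by
    rw [map_sub]
    have : (i.rTensor (N →₀ R)) (((ker q).subtype.lTensor K) w)
        = ((ker q).subtype.lTensor E) ((i.rTensor _) w) := by
      rw [← LinearMap.comp_apply, ← LinearMap.comp_apply,
        LinearMap.rTensor_comp_lTensor, LinearMap.lTensor_comp_rTensor]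
    rw [this, hw, hz, sub_self]
  have hFinj : Function.Injective (i.rTensor (N →₀ R)) :=
    Module.Flat.rTensor_preserves_injective_linearMap i hi
  have h5 : y - (ker q).subtype.lTensor K w = 0 := by
    apply hFinj; rw [h4, map_zero]
  rw [sub_eq_zero] at h5
  rw [← hy, h5, ← LinearMap.comp_apply, ← LinearMap.lTensor_comp]
  have : q ∘ₗ (ker q).subtype = 0 := by ext l; exact l.2
  rw [this, LinearMap.lTensor_zero, LinearMap.zero_apply]

/-- In a short exact sequence `0 → K → E → M → 0` with `E` and `M` flat, `K` is flat. -/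
theorem flat_of_exact_of_flat {R : Type*} [CommRing R]
    {K E M : Type*} [AddCommGroup K] [AddCommGroup E] [AddCommGroup M]
    [Module R K] [Module R E] [Module R M] [Module.Flat R E] [Module.Flat R M]
    (i : K →ₗ[R] E) (p : E →ₗ[R] M) (hi : Function.Injective i)
    (hexact : Function.Exact i p) (hp : Function.Surjective p) :
    Module.Flat R K := by
  rw [Module.Flat.iff_lTensor_injective']
  intro I
  have h1 : Function.Injective (i.rTensor I) :=
    rTensor_inj_of_flat_quot i p hi hexact hp
  have h2 : Function.Injective (I.subtype.lTensor E) :=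
    (Module.Flat.iff_lTensor_injective'.mp (inferInstance : Module.Flat R E)) I
  have hsq : (I.subtype.lTensor E) ∘ₗ (i.rTensor I) = (i.rTensor R) ∘ₗ (I.subtype.lTensor K) := by
    rw [LinearMap.lTensor_comp_rTensor, LinearMap.rTensor_comp_lTensor]
  have : Function.Injective ((i.rTensor R) ∘ₗ (I.subtype.lTensor K)) := by
    rw [← hsq]; exact h2.comp h1
  rw [LinearMap.coe_comp] at this
  exact this.of_comp

/-- `HomologicalDimLE` transports along linear equivalences. -/
theorem HomologicalDimLE.of_equiv {R : Type u} [Ring R] (n : ℕ) :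
    ∀ (M N : Type u) [AddCommGroup M] [Module R M] [AddCommGroup N] [Module R N]
      (_ : M ≃ₗ[R] N), HomologicalDimLE R n M → HomologicalDimLE R n N := by
  induction n with
  | zero =>
    intro M N _ _ _ _ e h
    have : Module.Projective R M := h
    show Module.Projective R N
    exact Module.Projective.of_equiv e
  | succ n ih =>
    intro M N _ _ _ _ e h
    obtain ⟨E, _, _, f, hproj, hsurj, hker⟩ := h
    refine ⟨E, _, _, (e : M →ₗ[R] N) ∘ₗ f, hproj, ?_, ?_⟩
    · exact e.surjective.comp hsurj
    · have hk : LinearMap.ker ((e : M →ₗ[R] N) ∘ₗ f) = LinearMap.ker f :=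
        LinearMap.ker_comp_of_ker_eq_bot f e.ker
      exact ih _ _ (LinearEquiv.ofEq _ _ hk.symm) hker

/-- Naturality of the base-change cancellation isomorphism
`(B ⊗[A] C) ⊗[B] X ≃ X ⊗[A] C`. -/
theorem cancel_natural {A B : Type*} [CommRing A] [CommRing B] [Algebra A B]
    {C : Type*} [AddCommGroup C] [Module A C]
    {X Y : Type*} [AddCommGroup X] [Module B X] [Module A X] [IsScalarTower A B X]
    [AddCommGroup Y] [Module B Y] [Module A Y] [IsScalarTower A B Y]
    (f : X →ₗ[B] Y) (z : (B ⊗[A] C) ⊗[B] X) :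
    (AlgebraTensorModule.cancelBaseChange A B B Y C)
      ((TensorProduct.comm B (B ⊗[A] C) Y) ((f.lTensor (B ⊗[A] C)) z))
    = ((f.restrictScalars A).rTensor C)
      ((AlgebraTensorModule.cancelBaseChange A B B X C)
        ((TensorProduct.comm B (B ⊗[A] C) X) z)) := by
  induction z with
  | zero => simp
  | add a b ha hb => simp only [map_add, ha, hb]
  | tmul s x =>
    induction s with
    | zero => simp
    | add s t hs ht =>
      rw [add_tmul]
      simp only [map_add] at hs ht ⊢
      rw [hs, ht]
    | tmul b c =>
      simp only [LinearMap.lTensor_tmul, TensorProduct.comm_tmul,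
        AlgebraTensorModule.cancelBaseChange_tmul, LinearMap.rTensor_tmul,
        LinearMap.coe_restrictScalars, map_smul]

/-- The inductive heart of the theorem: base change along `B → B ⊗[A] C` does not
increase the homological dimension of a `B`-module that is flat over `A`. -/
theorem aux_hd (A : Type u) [CommRing A] (B : Type u) [CommRing B] [Algebra A B]
    [Module.Flat A B] (C : Type u) [CommRing C] [Algebra A C] (n : ℕ) :
    ∀ (M : Type u) [AddCommGroup M] [Module B M] [Module A M] [IsScalarTower A B M]
      [Module.Flat A M], HomologicalDimLE B n M →
      HomologicalDimLE (B ⊗[A] C) n ((B ⊗[A] C) ⊗[B] M) := by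
  induction n with
  | zero =>
    intro M _ _ _ _ _ h
    haveI : Module.Projective B M := h
    show Module.Projective (B ⊗[A] C) ((B ⊗[A] C) ⊗[B] M)
    infer_instance
  | succ n ih =>
    intro M _ _ _ _ _ h
    obtain ⟨E, _, _, f, hproj, hsurj, hker⟩ := h
    letI : Module A E := Module.compHom E (algebraMap A B)
    haveI : IsScalarTower A B E := IsScalarTower.of_algebraMap_smul fun a e => rfl
    haveI : Module.Projective B E := hproj
    haveI : Module.Flat B E := Module.Flat.of_projective
    haveI : Module.Flat A E := Module.Flat.trans A B E
    have hexact : Function.Exact (LinearMap.ker f).subtype f := f.exact_subtype_ker_map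
    have hιinj : Function.Injective (LinearMap.ker f).subtype := Submodule.injective_subtype _
    have hexactA : Function.Exact (((LinearMap.ker f).subtype).restrictScalars A)
        (f.restrictScalars A) := hexact
    haveI : Module.Flat A (LinearMap.ker f) :=
      flat_of_exact_of_flat (((LinearMap.ker f).subtype).restrictScalars A)
        (f.restrictScalars A) hιinj hexactA hsurj
    have hinjA : Function.Injective ((((LinearMap.ker f).subtype).restrictScalars A).rTensor C) :=
      rTensor_inj_of_flat_quot _ _ hιinj hexactA hsurj
    have hinj : Function.Injective (((LinearMap.ker f).subtype).lTensor (B ⊗[A] C)) := by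
      intro u v huv
      have h1 := cancel_natural (A := A) (C := C) (LinearMap.ker f).subtype u
      have h2 := cancel_natural (A := A) (C := C) (LinearMap.ker f).subtype v
      rw [huv, h2] at h1
      have h3 := hinjA h1
      exact (TensorProduct.comm B (B ⊗[A] C) _).injective
        ((AlgebraTensorModule.cancelBaseChange A B B _ C).injective h3.symm)
    refine ⟨(B ⊗[A] C) ⊗[B] E, inferInstance, inferInstance, f.baseChange (B ⊗[A] C),
      inferInstance, ?_, ?_⟩
    · have : Function.Surjective (f.lTensor (B ⊗[A] C)) := LinearMap.lTensor_surjective _ hsurj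
      rwa [show (⇑(f.baseChange (B ⊗[A] C))) = ⇑(f.lTensor (B ⊗[A] C)) from
        LinearMap.baseChange_eq_ltensor _]
    · have hbex : Function.Exact (((LinearMap.ker f).subtype).baseChange (B ⊗[A] C))
          (f.baseChange (B ⊗[A] C)) := by
        have hl := @lTensor_exact B ↥(LinearMap.ker f) E M _ _ _ _ _ _ _
          (LinearMap.ker f).subtype f (B ⊗[A] C) _ _ hexact hsurj
        rwa [show (⇑(((LinearMap.ker f).subtype).baseChange (B ⊗[A] C)))
            = ⇑(((LinearMap.ker f).subtype).lTensor (B ⊗[A] C)) from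
          LinearMap.baseChange_eq_ltensor _,
          show (⇑(f.baseChange (B ⊗[A] C))) = ⇑(f.lTensor (B ⊗[A] C)) from
          LinearMap.baseChange_eq_ltensor _]
      have hrange : LinearMap.range (((LinearMap.ker f).subtype).baseChange (B ⊗[A] C))
          = LinearMap.ker (f.baseChange (B ⊗[A] C)) := (LinearMap.exact_iff.mp hbex).symm
      have hbinj : Function.Injective (((LinearMap.ker f).subtype).baseChange (B ⊗[A] C)) := by
        rwa [show (⇑(((LinearMap.ker f).subtype).baseChange (B ⊗[A] C)))
            = ⇑(((LinearMap.ker f).subtype).lTensor (B ⊗[A] C)) from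
          LinearMap.baseChange_eq_ltensor _]
      have e : ((B ⊗[A] C) ⊗[B] ↥(LinearMap.ker f)) ≃ₗ[B ⊗[A] C]
          ↥(LinearMap.ker (f.baseChange (B ⊗[A] C))) :=
        (LinearEquiv.ofInjective _ hbinj).trans (LinearEquiv.ofEq _ _ hrange)
      exact HomologicalDimLE.of_equiv n _ _ e (ih (LinearMap.ker f) hker)

/-- Let `A` be a commutative ring and `B` a flat `A`-algebra, and let
`M` be a `B`-module that is flat as an `A`-module.  Writing `A_red = A / Nil A`,
`B_red = B ⊗[A] A_red` and `M_red = M ⊗_A A_red = B_red ⊗[B] M`, if the homological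
dimension of `M` over `B` is at most `n`, then the homological dimension of `M_red`
over `B_red` is at most `n`. -/
theorem hd_le_of_hd_le_reduction
    (A : Type u) [CommRing A] (B : Type u) [CommRing B] [Algebra A B] [Module.Flat A B]
    (M : Type u) [AddCommGroup M] [Module B M] [Module A M] [IsScalarTower A B M]
    [Module.Flat A M] (n : ℕ)
    (h : HomologicalDimLE B n M) :
    HomologicalDimLE (B ⊗[A] (A ⧸ nilradical A)) n ((B ⊗[A] (A ⧸ nilradical A)) ⊗[B] M) := by
  exact aux_hd A B (A ⧸ nilradical A) n M h
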